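/- Let G be a finite simple graph that admits a 2-factor F with cycle components C_1, …, C_m such that, whenever two of these cycles are neighbors, repeated cycle-merging is possible: formally, suppose that for every partition of {C_1,…,C_m} induced by iteratively merging neighboring cycles there is a 4-cycle in G sharing one pair of opposite edges with two distinct current cycles whenever more than one cycle remains. Then G has a Hamiltonian cycle. In particular, if G is connected and every pair of neighboring cycles of any 2-factor arising during the merging process admits a separant 4-cycle, a Hamiltonian cycle of G can be constructed. -/

import Mathlib

/-!
Merging two vertex-disjoint cycles `C₁`, `C₂` along a separant `abcd` (delete the edges
`ab ∈ C₁`, `cd ∈ C₂`, add `bc`, `da`) is an edge switch: each of `a, b, c, d` trades one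
neighbour for another, so all degrees stay `2`. The result is connected because a cycle minus
one edge is still connected (no edge of a 2-regular graph is a bridge), and `bc` joins the two
paths so obtained. Hence every merge step turns a 2-factor into a 2-factor with one cycle fewer.
By hypothesis a step is available as long as more than one cycle remains, so the process ends in
a single cycle through every vertex: a Hamiltonian cycle.
-/

variable {V : Type*}

/-- A subgraph is a cycle if it is nonempty, connected and every one of its
vertices has exactly two neighbours within it. -/
def SimpleGraph.Subgraph.IsCycleSubgraph {G : SimpleGraph V}
    (C : G.Subgraph) : Prop :=
  C.Connected ∧ ∀ v ∈ C.verts, (C.neighborSet v).ncard = 2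

/-- One step of the cycle-merging process: two distinct cycles `C₁, C₂` of the
current family `S` admitting a separant 4-cycle `a, b, c, d` (the edge `ab`
lies in `C₁`, the edge `cd` lies in `C₂`, and the edges `bc`, `ad` lie in `G`
but in neither cycle) are replaced by the single merged cycle
`(C₁ ∪ C₂) ⊕ C_f`, obtained by deleting the edges `ab`, `cd` and adding the
edges `bc`, `ad`. -/
def MergeStep {G : SimpleGraph V} (S T : Set G.Subgraph) : Prop :=
  ∃ C₁ ∈ S, ∃ C₂ ∈ S, C₁ ≠ C₂ ∧
    ∃ (a b c d : V) (hbc : G.Adj b c) (hda : G.Adj d a),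
      C₁.Adj a b ∧ C₂.Adj c d ∧
      ¬ C₁.Adj b c ∧ ¬ C₂.Adj b c ∧ ¬ C₁.Adj a d ∧ ¬ C₂.Adj a d ∧
      T = (S \ {C₁, C₂}) ∪
        {(C₁ ⊔ C₂).deleteEdges {s(a, b), s(c, d)} ⊔ G.subgraphOfAdj hbc ⊔
          G.subgraphOfAdj hda}

lemma SimpleGraph.Walk.IsCycle.isHamiltonianCycle_of_forall_mem_support [DecidableEq V]
    {G : SimpleGraph V} {u : V} {p : G.Walk u u} (hp : p.IsCycle) (h : ∀ v, v ∈ p.support) :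
    p.IsHamiltonianCycle := by
  refine Walk.isHamiltonianCycle_iff_isCycle_and_support_count_tail_eq_one.mpr
    ⟨hp, fun v => List.count_eq_one_of_mem hp.support_nodup ?_⟩
  rcases (Walk.mem_support_iff p).mp (h v) with rfl | hv
  exacts [Walk.end_mem_tail_support hp.not_nil, hv]

namespace SimpleGraph.Subgraph

variable {G : SimpleGraph V} {H C C₁ C₂ : G.Subgraph} {a b c d : V}

/-- For `H = C₁ ⊔ C₂` this is the merged cycle `(C₁ ∪ C₂) ⊕ C_f` of a `MergeStep`. -/
def switch (H : G.Subgraph) (hbc : G.Adj b c) (hda : G.Adj d a) : G.Subgraph :=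
  H.deleteEdges {s(a, b), s(c, d)} ⊔ G.subgraphOfAdj hbc ⊔ G.subgraphOfAdj hda

variable {hbc : G.Adj b c} {hda : G.Adj d a}

lemma switch_adj {x y : V} : (H.switch hbc hda).Adj x y ↔
    (H.Adj x y ∧ s(x, y) ≠ s(a, b) ∧ s(x, y) ≠ s(c, d)) ∨ s(b, c) = s(x, y) ∨
      s(d, a) = s(x, y) := by
  simp only [switch, sup_adj, deleteEdges_adj, Set.mem_insert_iff, Set.mem_singleton_iff, not_or,
    subgraphOfAdj_adj, or_assoc]

lemma verts_switch (hab : H.Adj a b) (hcd : H.Adj c d) : (H.switch hbc hda).verts = H.verts := by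
  have := H.edge_vert hab; have := H.edge_vert hab.symm
  have := H.edge_vert hcd; have := H.edge_vert hcd.symm
  simp only [switch, verts_sup, deleteEdges_verts, subgraphOfAdj_verts]
  grind

lemma ncard_neighborSet_switch [Finite V] (hab : H.Adj a b) (hcd : H.Adj c d)
    (hbc' : ¬ H.Adj b c) (hda' : ¬ H.Adj d a) (v : V) :
    ((H.switch hbc hda).neighborSet v).ncard = (H.neighborSet v).ncard := by
  have hac : a ≠ c := by rintro rfl; exact hbc' hab.symm
  have hbd : b ≠ d := by rintro rfl; exact hda' hab.symm
  have := hab.adj_sub.ne; have := hcd.adj_sub.ne; have := hbc.ne; have := hda.ne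
  have exchange : ∀ {x y}, H.Adj v x → ¬ H.Adj v y →
      (H.switch hbc hda).neighborSet v = insert y (H.neighborSet v \ {x}) →
      ((H.switch hbc hda).neighborSet v).ncard = (H.neighborSet v).ncard :=
    fun hx hy h => h ▸ Set.ncard_exchange hy hx
  obtain rfl | rfl | rfl | rfl | ⟨hva, hvb, hvc, hvd⟩ :
      v = a ∨ v = b ∨ v = c ∨ v = d ∨ (v ≠ a ∧ v ≠ b ∧ v ≠ c ∧ v ≠ d) := by tauto
  on_goal 1 => refine exchange hab (fun h => hda' h.symm) ?_
  on_goal 2 => refine exchange hab.symm hbc' ?_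
  on_goal 3 => refine exchange hcd (fun h => hbc' h.symm) ?_
  on_goal 4 => refine exchange hcd.symm hda' ?_
  on_goal 5 => congr 1
  all_goals
    ext w
    simp only [mem_neighborSet, switch_adj, Set.mem_insert_iff, Set.mem_sdiff,
      Set.mem_singleton_iff, Sym2.eq_iff]
    grind

lemma neighborSet_sup_of_notMem_verts {H' : G.Subgraph} {v : V} (hv : v ∉ H'.verts) :
    (H ⊔ H').neighborSet v = H.neighborSet v := by
  rw [neighborSet_sup, Set.union_eq_left]
  exact fun w hw => absurd (H'.edge_vert hw) hv

lemma IsCycleSubgraph.ncard_neighborSet_coe (hC : C.IsCycleSubgraph) (v : C.verts) :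
    (C.coe.neighborSet v).ncard = 2 :=
  (Set.ncard_congr' (C.coeNeighborSetEquiv v)).trans (hC.2 v v.2)

lemma IsCycleSubgraph.isCycles_coe (hC : C.IsCycleSubgraph) : C.coe.IsCycles :=
  fun v _ => hC.ncard_neighborSet_coe v

lemma IsCycleSubgraph.connected_deleteEdges [Finite V] (hC : C.IsCycleSubgraph)
    (hab : C.Adj a b) : (C.deleteEdges {s(a, b)}).Connected := by
  let a' : C.verts := ⟨a, C.edge_vert hab⟩
  let b' : C.verts := ⟨b, C.edge_vert hab.symm⟩
  have hab' : C.coe.Adj a' b' := hab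
  have := hC.1.coe.connected_delete_edge_of_not_isBridge
    (isBridge_iff.not_left.mpr (hC.isCycles_coe.reachable_deleteEdges hab'))
  rw [deleteEdges_coe_eq, Set.image_singleton, Sym2.map_mk] at this
  exact ⟨this⟩

lemma IsCycleSubgraph.sup_switch [Finite V] (h₁ : C₁.IsCycleSubgraph) (h₂ : C₂.IsCycleSubgraph)
    (hdisj : Disjoint C₁.verts C₂.verts) (hab : C₁.Adj a b) (hcd : C₂.Adj c d) :
    ((C₁ ⊔ C₂).switch hbc hda).IsCycleSubgraph := by
  have ha := C₁.edge_vert hab; have hb := C₁.edge_vert hab.symm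
  have hc := C₂.edge_vert hcd; have hd := C₂.edge_vert hcd.symm
  have hnot₂ : ∀ {x}, x ∈ C₁.verts → x ∉ C₂.verts := fun hx => Set.disjoint_left.mp hdisj hx
  have hverts : ((C₁ ⊔ C₂).switch hbc hda).verts = C₁.verts ∪ C₂.verts :=
    verts_switch (Or.inl hab) (Or.inr hcd)
  refine ⟨?_, fun v hv => ?_⟩
  · have hD₁ := h₁.connected_deleteEdges hab
    have hD₂ := h₂.connected_deleteEdges hcd
    have hD := connected_sup (connected_sup hD₁.preconnected
      (subgraphOfAdj_connected hbc).preconnected ⟨b, hb, by simp⟩).preconnected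
      hD₂.preconnected ⟨c, by simp, hc⟩
    refine hD.mono' (fun x y hxy => ?_) (by ext; simp only [verts_sup, deleteEdges_verts,
      subgraphOfAdj_verts, hverts, Set.mem_union, Set.mem_insert_iff]; grind)
    have := @C₁.edge_vert; have := @C₂.edge_vert
    simp only [switch_adj, sup_adj, deleteEdges_adj, Set.mem_singleton_iff, subgraphOfAdj_adj,
      Sym2.eq_iff] at hxy ⊢
    grind
  · have hbc' : ¬ (C₁ ⊔ C₂).Adj b c := by
      rintro (h | h)
      exacts [hnot₂ (C₁.edge_vert h.symm) hc, hnot₂ hb (C₂.edge_vert h)]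
    have hda' : ¬ (C₁ ⊔ C₂).Adj d a := by
      rintro (h | h)
      exacts [hnot₂ (C₁.edge_vert h) hd, hnot₂ ha (C₂.edge_vert h.symm)]
    rw [ncard_neighborSet_switch (Or.inl hab) (Or.inr hcd) hbc' hda']
    rcases hverts ▸ hv with hv | hv
    · rw [neighborSet_sup_of_notMem_verts (hnot₂ hv), h₁.2 v hv]
    · rw [sup_comm, neighborSet_sup_of_notMem_verts (fun h => hnot₂ h hv), h₂.2 v hv]

lemma IsCycleSubgraph.exists_isHamiltonianCycle [Finite V] [DecidableEq V]
    (hC : C.IsCycleSubgraph) (hspan : C.verts = Set.univ) :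
    ∃ (u : V) (p : G.Walk u u), p.IsHamiltonianCycle := by
  obtain ⟨v, hv⟩ := hC.1.nonempty
  obtain ⟨p, hp, hpverts⟩ :=
    hC.isCycles_coe.exists_cycle_toSubgraph_verts_eq_connectedComponentSupp
      (c := C.coe.connectedComponentMk ⟨v, hv⟩) rfl
      (Set.nonempty_of_ncard_ne_zero (by simp [hC.ncard_neighborSet_coe]))
  have hsupport : ∀ w, w ∈ p.support := fun w => by
    rw [← Walk.mem_verts_toSubgraph, hpverts]
    exact ConnectedComponent.eq.mpr (hC.1.coe.preconnected w ⟨v, hv⟩)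
  have hval : Function.Bijective C.hom :=
    ⟨Subtype.val_injective, fun w => ⟨⟨w, hspan ▸ trivial⟩, rfl⟩⟩
  exact ⟨_, _, (hp.isHamiltonianCycle_of_forall_mem_support hsupport).map hval⟩

end SimpleGraph.Subgraph

theorem Relation.exists_reflTransGen_of_measure_lt {α : Type*} {r : α → α → Prop}
    {P : α → Prop} (f : α → ℕ) (hf : ∀ ⦃x y⦄, r x y → f y < f x) {a : α}
    (hstep : ∀ x, ReflTransGen r a x → ¬ P x → ∃ y, r x y) :
    ∃ x, ReflTransGen r a x ∧ P x := by
  obtain ⟨x, hx, hmin⟩ := (measure f).wf.has_min {x | ReflTransGen r a x} ⟨a, .refl⟩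
  refine ⟨x, hx, by_contra fun hP => ?_⟩
  obtain ⟨y, hy⟩ := hstep x hx hP
  exact hmin y (hx.tail hy) (hf hy)

section TwoFactor

open SimpleGraph Subgraph

variable {G : SimpleGraph V}

structure IsTwoFactor (S : Set G.Subgraph) : Prop where
  isCycleSubgraph : ∀ C ∈ S, C.IsCycleSubgraph
  pairwise_disjoint : S.Pairwise fun C₁ C₂ => Disjoint C₁.verts C₂.verts
  exists_mem_verts : ∀ v, ∃ C ∈ S, v ∈ C.verts

lemma IsTwoFactor.replace {S : Set G.Subgraph} (hS : IsTwoFactor S) {C₁ C₂ M : G.Subgraph}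
    (h₁ : C₁ ∈ S) (h₂ : C₂ ∈ S) (hM : M.IsCycleSubgraph)
    (hMverts : M.verts = C₁.verts ∪ C₂.verts) : IsTwoFactor ((S \ {C₁, C₂}) ∪ {M}) := by
  have hdisjM : ∀ D ∈ S \ {C₁, C₂}, Disjoint D.verts M.verts := by
    rintro D ⟨hD, hD12⟩
    simp only [Set.mem_insert_iff, Set.mem_singleton_iff, not_or] at hD12
    rw [hMverts, Set.disjoint_union_right]
    exact ⟨hS.pairwise_disjoint hD h₁ hD12.1, hS.pairwise_disjoint hD h₂ hD12.2⟩
  refine ⟨?_, ?_, fun v => ?_⟩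
  · rintro C (hC | rfl)
    exacts [hS.isCycleSubgraph C hC.1, hM]
  · refine Set.pairwise_union.mpr ⟨hS.pairwise_disjoint.mono Set.sdiff_subset,
      Set.pairwise_singleton .., ?_⟩
    rintro D hD _ rfl -
    exact ⟨hdisjM D hD, (hdisjM D hD).symm⟩
  · obtain ⟨C, hC, hv⟩ := hS.exists_mem_verts v
    by_cases hC12 : C ∈ ({C₁, C₂} : Set G.Subgraph)
    · refine ⟨M, Or.inr rfl, hMverts ▸ ?_⟩
      rcases hC12 with rfl | rfl
      exacts [Or.inl hv, Or.inr hv]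
    · exact ⟨C, Or.inl ⟨hC, hC12⟩, hv⟩

lemma IsTwoFactor.mergeStep [Finite V] {S T : Set G.Subgraph} (hS : IsTwoFactor S)
    (h : MergeStep S T) : IsTwoFactor T := by
  obtain ⟨C₁, h₁, C₂, h₂, hne, a, b, c, d, hbc, hda, hab, hcd, -, -, -, -, rfl⟩ := h
  exact hS.replace h₁ h₂
    ((hS.isCycleSubgraph C₁ h₁).sup_switch (hS.isCycleSubgraph C₂ h₂)
      (hS.pairwise_disjoint h₁ h₂ hne) hab hcd)
    (verts_switch (Or.inl hab) (Or.inr hcd))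

lemma IsTwoFactor.reflTransGen [Finite V] {S T : Set G.Subgraph} (hS : IsTwoFactor S)
    (h : Relation.ReflTransGen MergeStep S T) : IsTwoFactor T := by
  induction h with
  | refl => exact hS
  | tail _ hstep ih => exact ih.mergeStep hstep

lemma MergeStep.ncard_lt [Finite V] {S T : Set G.Subgraph} (h : MergeStep S T) :
    T.ncard < S.ncard := by
  obtain ⟨C₁, h₁, C₂, h₂, hne, _, _, _, _, _, _, -, -, -, -, -, -, rfl⟩ := h
  have hpair : (S \ {C₁, C₂}).ncard = S.ncard - 2 := by
    rw [Set.ncard_sdiff (Set.pair_subset h₁ h₂), Set.ncard_pair hne]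
  have h2 : 2 ≤ S.ncard := Set.ncard_pair hne ▸ Set.ncard_le_ncard (Set.pair_subset h₁ h₂)
  grw [Set.ncard_union_le, Set.ncard_singleton]
  omega

lemma IsTwoFactor.exists_verts_eq_univ [Finite V] [Nonempty V] {S : Set G.Subgraph}
    (hS : IsTwoFactor S) (h : S.ncard ≤ 1) : ∃ C ∈ S, C.verts = Set.univ := by
  obtain ⟨C, hC, -⟩ := hS.exists_mem_verts (Classical.arbitrary V)
  refine ⟨C, hC, Set.eq_univ_of_forall fun v => ?_⟩
  obtain ⟨C', hC', hv⟩ := hS.exists_mem_verts v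
  rwa [(Set.ncard_le_one (Set.toFinite S)).mp h C' hC' C hC] at hv

end TwoFactor

theorem hamiltonian_of_iterated_cycle_merging_general {G : SimpleGraph V} [Fintype V]
    [DecidableEq V]
    (S₀ : Set G.Subgraph) (hne : S₀.Nonempty)
    (hcyc : ∀ C ∈ S₀, C.IsCycleSubgraph)
    (hdisj : S₀.Pairwise fun C₁ C₂ => Disjoint C₁.verts C₂.verts)
    (hspan : ∀ v : V, ∃ C ∈ S₀, v ∈ C.verts)
    (hsep : ∀ T : Set G.Subgraph, Relation.ReflTransGen MergeStep S₀ T →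
      1 < T.ncard →
      ∃ C₁ ∈ T, ∃ C₂ ∈ T, C₁ ≠ C₂ ∧
        ∃ a b c d : V, G.Adj b c ∧ G.Adj d a ∧ C₁.Adj a b ∧ C₂.Adj c d ∧
          ¬ C₁.Adj b c ∧ ¬ C₂.Adj b c ∧ ¬ C₁.Adj a d ∧ ¬ C₂.Adj a d) :
    ∃ (a : V) (p : G.Walk a a), p.IsHamiltonianCycle := by
  obtain ⟨C₀, hC₀⟩ := hne
  have : Nonempty V := ⟨(hcyc C₀ hC₀).1.nonempty.some⟩
  obtain ⟨T, hT, hcard⟩ := Relation.exists_reflTransGen_of_measure_lt (P := (·.ncard ≤ 1))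
    Set.ncard (fun _ _ => MergeStep.ncard_lt) fun T hT hmany => by
      obtain ⟨C₁, h₁, C₂, h₂, h₁₂, a, b, c, d, hbc, hda, hab, hcd, h₁bc, h₂bc, h₁ad, h₂ad⟩ :=
        hsep T hT (not_le.mp hmany)
      exact ⟨_, C₁, h₁, C₂, h₂, h₁₂, a, b, c, d, hbc, hda, hab, hcd, h₁bc, h₂bc, h₁ad, h₂ad, rfl⟩
  have hT' := (IsTwoFactor.mk hcyc hdisj hspan).reflTransGen hT
  obtain ⟨C, hC, hCverts⟩ := hT'.exists_verts_eq_univ hcard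
  exact (hT'.isCycleSubgraph C hC).exists_isHamiltonianCycle hCverts

/-- Let `G` be a finite simple graph admitting a 2-factor whose components are
the vertex-disjoint cycles of the family `S₀`, and suppose that every family of
cycles arising from `S₀` by iteratively merging neighbouring cycles still
admits a separant 4-cycle between two distinct current cycles whenever more
than one cycle remains.  Then `G` has a Hamiltonian cycle. -/
theorem hamiltonian_of_iterated_cycle_merging {G : SimpleGraph V} [Fintype V]
    [DecidableEq V]
    (S₀ : Set G.Subgraph) (hfin : S₀.Finite) (hne : S₀.Nonempty)
    (hcyc : ∀ C ∈ S₀, C.IsCycleSubgraph)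
    (hdisj : S₀.Pairwise fun C₁ C₂ => Disjoint C₁.verts C₂.verts)
    (hspan : ∀ v : V, ∃ C ∈ S₀, v ∈ C.verts)
    (hsep : ∀ T : Set G.Subgraph, Relation.ReflTransGen MergeStep S₀ T →
      1 < T.ncard →
      ∃ C₁ ∈ T, ∃ C₂ ∈ T, C₁ ≠ C₂ ∧
        ∃ a b c d : V, G.Adj b c ∧ G.Adj d a ∧ C₁.Adj a b ∧ C₂.Adj c d ∧
          ¬ C₁.Adj b c ∧ ¬ C₂.Adj b c ∧ ¬ C₁.Adj a d ∧ ¬ C₂.Adj a d) :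
    ∃ (a : V) (p : G.Walk a a), p.IsHamiltonianCycle :=
  hamiltonian_of_iterated_cycle_merging_general S₀ hne hcyc hdisj hspan hsep
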